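/- In a biconnected outerplanar graph (embedded with all vertices on the unbounded face), every pair of basic cycles (boundaries of bounded faces) has at most one edge in common. -/

import Mathlib

noncomputable section

/-- The geometric realization of a set of faces `K` (an abstract simplicial complex):
the space of convex-combination weight functions supported on a face. -/
def realization {α : Type*} (K : Set (Finset α)) : Type _ :=
  {f : α → ℝ // (∀ a, 0 ≤ f a) ∧ ∃ s ∈ K, Function.support f ⊆ ↑s ∧ ∑ a ∈ s, f a = 1}

instance realization.topologicalSpace {α : Type*} (K : Set (Finset α)) :
    TopologicalSpace (realization K) :=
  instTopologicalSpaceSubtype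

/-- The unreduced suspension of a space: the cylinder `X × [0,1]` together with two cone
points, gluing `X × {0}` to one and `X × {1}` to the other.  (With this definition, the
suspension of the empty space is the two-point space `S⁰`.) -/
def Susp (X : Type*) [TopologicalSpace X] : Type _ :=
  Quot (fun (p q : (X × Set.Icc (0:ℝ) 1) ⊕ Bool) =>
    match p, q with
    | Sum.inl p, Sum.inr b => ((p.2 : ℝ) = 0 ∧ b = false) ∨ ((p.2 : ℝ) = 1 ∧ b = true)
    | _, _ => False)

instance Susp.topologicalSpace (X : Type*) [TopologicalSpace X] :
    TopologicalSpace (Susp X) := by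
  unfold Susp; infer_instance

/-- The wedge sum of two pointed spaces. -/
def Wedge (X : Type*) (Y : Type*) [TopologicalSpace X] [TopologicalSpace Y]
    (x : X) (y : Y) : Type _ :=
  Quot (fun (a b : X ⊕ Y) => a = Sum.inl x ∧ b = Sum.inr y)

instance Wedge.topologicalSpace (X : Type*) (Y : Type*) [TopologicalSpace X]
    [TopologicalSpace Y] (x : X) (y : Y) : TopologicalSpace (Wedge X Y x y) := by
  unfold Wedge; infer_instance

/-- The `n`-sphere, as the unit sphere in `ℝ^(n+1)`. -/
def nSphere (n : ℕ) : Type :=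
  Metric.sphere (0 : EuclideanSpace ℝ (Fin (n + 1))) 1

instance nSphere.topologicalSpace (n : ℕ) : TopologicalSpace (nSphere n) := by
  unfold nSphere; infer_instance

/-- A basepoint on the `n`-sphere. -/
def spherePt (n : ℕ) : nSphere n :=
  ⟨EuclideanSpace.single 0 1, by simp [EuclideanSpace.norm_single]⟩

/-- The wedge of a family of spheres, of dimensions `n i`. -/
def WedgeOfSpheres {ι : Type} (n : ι → ℕ) : Type :=
  Quot (fun (a b : Σ i, nSphere (n i)) =>
    ∃ i j, a = ⟨i, spherePt (n i)⟩ ∧ b = ⟨j, spherePt (n j)⟩)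

instance WedgeOfSpheres.topologicalSpace {ι : Type} (n : ι → ℕ) :
    TopologicalSpace (WedgeOfSpheres n) := by
  unfold WedgeOfSpheres; infer_instance

/-- A space is (homotopy equivalent to) a wedge of spheres if it is homotopy equivalent to a
wedge of finitely many spheres of possibly varying dimensions. -/
def IsWedgeOfSpheres (X : Type*) [TopologicalSpace X] : Prop :=
  ∃ (k : ℕ) (n : Fin k → ℕ), Nonempty (ContinuousMap.HomotopyEquiv X (WedgeOfSpheres n))
/-- The matching complex of a simple graph: faces are finite sets of pairwise disjoint edges. -/
def matchingComplex {V : Type*} (G : SimpleGraph V) : Set (Finset (Sym2 V)) :=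
  {s | (∀ e ∈ s, e ∈ G.edgeSet) ∧ ∀ e ∈ s, ∀ f ∈ s, e ≠ f → ∀ v, v ∈ e → v ∉ f}

/-- The open edge neighborhood `EN(e)`: the set of edges of `G` adjacent to (sharing a vertex
with) `e`, other than `e` itself. -/
def edgeNbhdOpen {V : Type*} (G : SimpleGraph V) (e : Sym2 V) : Set (Sym2 V) :=
  {f | f ∈ G.edgeSet ∧ f ≠ e ∧ ∃ v, v ∈ e ∧ v ∈ f}

/-- The closed edge neighborhood `EN[e]`: the set of edges of `G` sharing a vertex with `e`,
together with `e` itself. -/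
def edgeNbhdClosed {V : Type*} (G : SimpleGraph V) (e : Sym2 V) : Set (Sym2 V) :=
  {f | f ∈ G.edgeSet ∧ ∃ v, v ∈ e ∧ v ∈ f}

/-- Two chords of a circle, with endpoints at circle positions `a, b` and `c, d`
(positions measured injectively along the circle), cross iff their endpoints interleave. -/
def chordsCross (a b c d : ℝ) : Prop :=
  (min a b < min c d ∧ min c d < max a b ∧ max a b < max c d) ∨
  (min c d < min a b ∧ min a b < max c d ∧ max c d < max a b)

/-- A graph is outerplanar iff it has a drawing with all vertices (injectively) on a circle
and edges drawn as pairwise noncrossing chords; equivalently, a planar drawing with every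
vertex on the unbounded face. -/
def Outerplanar {V : Type*} (G : SimpleGraph V) : Prop :=
  ∃ f : V ↪ ℝ, ∀ a b c d, G.Adj a b → G.Adj c d →
    a ≠ c → a ≠ d → b ≠ c → b ≠ d → ¬ chordsCross (f a) (f b) (f c) (f d)

/-- An outerplanar graph is maximal outerplanar if adding any edge destroys outerplanarity. -/
def MaximalOuterplanar {V : Type*} (G : SimpleGraph V) : Prop :=
  Outerplanar G ∧ ∀ a b : V, a ≠ b → ¬ G.Adj a b →
    ¬ Outerplanar (G ⊔ SimpleGraph.fromEdgeSet {s(a, b)})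
/-- A cutpoint (cut-vertex) of a graph: a vertex whose removal disconnects two vertices that
were connected, i.e. whose removal increases the number of connected components. -/
def IsCutvertex {V : Type*} (G : SimpleGraph V) (v : V) : Prop :=
  ∃ a b : {u : V // u ≠ v}, G.Reachable a.1 b.1 ∧
    ¬ (G.induce {u : V | u ≠ v}).Reachable ⟨a.1, a.2⟩ ⟨b.1, b.2⟩

/-- A block of `G`: a maximal connected subgraph having no cutpoint of itself. -/
def IsBlock {V : Type*} (G : SimpleGraph V) (H : G.Subgraph) : Prop :=
  H.Connected ∧ (∀ v, ¬ IsCutvertex H.coe v) ∧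
    ∀ H' : G.Subgraph, H ≤ H' → H'.Connected → (∀ v, ¬ IsCutvertex H'.coe v) → H' = H

/-- The block-cutpoint graph of `G`: the bipartite graph on blocks and cutpoints of `G`,
with a block `B` adjacent to a cutpoint `c` iff `c` belongs to `B`. -/
def blockCutpointGraph {V : Type*} (G : SimpleGraph V) :
    SimpleGraph ({H : G.Subgraph // IsBlock G H} ⊕ {v : V // IsCutvertex G v}) :=
  SimpleGraph.fromRel (fun x y =>
    ∃ B c, x = Sum.inl B ∧ y = Sum.inr c ∧ c.1 ∈ B.1.verts)

/-- A cycle (given as a closed walk) is chordless if every edge of `G` joining two of its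
vertices is an edge of the cycle.  In an outerplanar graph drawn with all vertices on the
unbounded face, the basic cycles (boundaries of the bounded faces) are exactly the
chordless cycles. -/
def Chordless {V : Type*} (G : SimpleGraph V) {v : V} (p : G.Walk v v) : Prop :=
  ∀ a ∈ p.support, ∀ b ∈ p.support, G.Adj a b → s(a, b) ∈ p.edges

/-- The basic cycles of (an outerplanar graph) `G`, recorded by their edge sets. -/
def basicCycles {V : Type*} [DecidableEq V] (G : SimpleGraph V) : Set (Finset (Sym2 V)) :=
  {s | ∃ (v : V) (p : G.Walk v v), p.IsCycle ∧ Chordless G p ∧ s = p.edges.toFinset}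

/-- The weak dual of (an outerplanar graph) `G`: vertices are the basic cycles (bounded
faces), two being adjacent iff they share at least one edge. -/
def weakDual {V : Type*} [DecidableEq V] (G : SimpleGraph V) :
    SimpleGraph (basicCycles G) :=
  SimpleGraph.fromRel (fun s t => ((s.1 ∩ t.1) : Finset (Sym2 V)).Nonempty)

/-- A multigraph on vertex set `V`: an edge index type together with an assignment of
(unordered pairs of) endpoints. -/
structure Multigraph (V : Type u) : Type (max u (v + 1)) where
  E : Type v
  ends : E → Sym2 V

/-- The matching complex of a multigraph: faces are finite sets of pairwise
vertex-disjoint edges. -/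
def Multigraph.matchingComplex {V : Type*} (M : Multigraph V) : Set (Finset M.E) :=
  {s | ∀ i ∈ s, ∀ j ∈ s, i ≠ j → ∀ v, v ∈ M.ends i → v ∉ M.ends j}

-- ===== auxiliary development for the final theorem =====
set_option linter.unusedSectionVars false
set_option maxHeartbeats 1000000

namespace OPAux

open SimpleGraph Walk Function

variable {V : Type*} [DecidableEq V] {G : SimpleGraph V} {g : V → ℝ}




/-- The crossing-contradiction pattern. -/
def CrossFree (G : SimpleGraph V) (g : V → ℝ) : Prop :=
  ∀ a b c d, G.Adj a b → G.Adj c d → g a < g c → g c < g b → g b < g d → False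

lemma core_walk (hginj : Injective g) (hgc : CrossFree G g)
    {x y : V} (hxy : G.Adj x y) :
    ∀ {c d : V} (w : G.Walk c d), x ∉ w.support → y ∉ w.support →
      (∃ z ∈ w.support, g x < g z ∧ g z < g y) →
      (∃ m ∈ w.support, g m < g x ∨ g y < g m) → False := by
  have status : ∀ v : V, v ≠ x → v ≠ y →
      (g x < g v ∧ g v < g y) ∨ (g v < g x ∨ g y < g v) := by
    intro v hvx hvy
    rcases lt_trichotomy (g v) (g x) with h | h | h
    · exact Or.inr (Or.inl h)
    · exact absurd (hginj h) hvx
    · rcases lt_trichotomy (g v) (g y) with h' | h' | h'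
      · exact Or.inl ⟨h, h'⟩
      · exact absurd (hginj h') hvy
      · exact Or.inr (Or.inr h')
  intro c d w
  induction w with
  | nil =>
    intro _ _ hz hm
    simp only [support_nil, List.mem_singleton] at hz hm
    obtain ⟨z, rfl, h1, h2⟩ := hz
    obtain ⟨m, rfl, hmo⟩ := hm
    rcases hmo with h | h <;> linarith
  | @cons c c' d h w ih =>
    intro hx hy hz hm
    simp only [support_cons, List.mem_cons] at hx hy hz hm
    push_neg at hx hy
    obtain ⟨hx1, hx2⟩ := hx
    obtain ⟨hy1, hy2⟩ := hy
    have hcx : c ≠ x := fun h' => hx1 h'.symm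
    have hcy : c ≠ y := fun h' => hy1 h'.symm
    have hc'x : c' ≠ x := fun h' => hx2 (h' ▸ w.start_mem_support)
    have hc'y : c' ≠ y := fun h' => hy2 (h' ▸ w.start_mem_support)
    obtain ⟨z, hzmem, hz1, hz2⟩ := hz
    obtain ⟨m, hmmem, hmo⟩ := hm
    by_cases hc : g x < g c ∧ g c < g y
    · rcases hmmem with rfl | hm'
      · rcases hmo with h' | h' <;> linarith [hc.1, hc.2]
      · rcases status c' hc'x hc'y with hc' | hc'
        · exact ih hx2 hy2 ⟨c', w.start_mem_support, hc'⟩ ⟨m, hm', hmo⟩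
        · rcases hc' with h' | h'
          · exact hgc c' c x y h.symm hxy h' hc.1 hc.2
          · exact hgc x y c c' hxy h hc.1 hc.2 h'
    · rcases hzmem with rfl | hz'
      · exact hc ⟨hz1, hz2⟩
      · have hco : g c < g x ∨ g y < g c := (status c hcx hcy).resolve_left hc
        rcases status c' hc'x hc'y with hc' | hc'
        · rcases hco with h' | h'
          · exact hgc c c' x y h hxy h' hc'.1 hc'.2
          · exact hgc x y c' c hxy h.symm hc'.1 hc'.2 h'
        · exact ih hx2 hy2 ⟨z, hz', hz1, hz2⟩ ⟨c', w.start_mem_support, hc'⟩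

lemma last_edge {x y : V} :
    ∀ {c : V} (w : G.Walk c x), w.support.Nodup → s(x, y) ∈ w.edges →
      ∃ (h : G.Adj y x) (w' : G.Walk c y), w = w'.concat h := by
  intro c w
  induction w with
  | nil => intro _ h; simp at h
  | @cons c b x' h w ih =>
    intro hnd he
    simp only [edges_cons, List.mem_cons] at he
    simp only [support_cons, List.nodup_cons] at hnd
    rcases he with he | he
    · rw [Sym2.eq_iff] at he
      rcases he with ⟨hxc, rfl⟩ | ⟨hxb, rfl⟩
      · exact absurd (hxc ▸ w.end_mem_support) hnd.1
      · subst hxb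
        have hw : w = Walk.nil := Walk.isPath_iff_eq_nil.mp (Walk.IsPath.mk' hnd.2)
        subst hw
        exact ⟨h, Walk.nil, by rw [Walk.concat_nil]⟩
    · obtain ⟨h', w'', rfl⟩ := ih hnd.2 he
      exact ⟨h', Walk.cons h w'', (Walk.concat_cons _ _ _).symm⟩

lemma mem_support_tail_of_cycle {u z : V} (p : G.Walk u u) (hnp : p ≠ Walk.nil)
    (hz : z ∈ p.support) : z ∈ p.support.tail := by
  cases p with
  | nil => exact absurd rfl hnp
  | cons h w =>
    simp only [support_cons, List.tail_cons]
    rcases List.mem_cons.mp (by simpa [support_cons] using hz) with rfl | hz'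
    · exact w.end_mem_support
    · exact hz'

lemma aux_cycle (hginj : Injective g) (hgc : CrossFree G g)
    {x y : V} (hxy : G.Adj x y) {z m : V} (q : G.Walk y x) (hnd : q.support.Nodup)
    (hz : z ∈ q.support) (hm : m ∈ q.support)
    (h1 : g x < g z) (h2 : g z < g y) (hout : g m < g x ∨ g y < g m) : False := by
  have hfxy : g x < g y := h1.trans h2
  have hyx : y ≠ x := fun h => by rw [h] at hfxy; exact lt_irrefl _ hfxy
  have hzx : z ≠ x := fun h => by rw [h] at h1; exact lt_irrefl _ h1
  have hzy : z ≠ y := fun h => by rw [h] at h2; exact lt_irrefl _ h2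
  have hmx : m ≠ x := fun h => by subst h; rcases hout with h' | h' <;> linarith
  have hmy : m ≠ y := fun h => by subst h; rcases hout with h' | h' <;> linarith
  obtain ⟨b, hb, q₁, rfl⟩ := Walk.exists_eq_cons_of_ne hyx q
  obtain ⟨d₃, q₃, h₃, hcat⟩ := Walk.exists_cons_eq_concat hb q₁
  rw [hcat] at hnd hz hm
  rw [Walk.support_concat] at hnd hz hm
  simp only [List.concat_eq_append, List.nodup_append, List.mem_append,
    List.mem_singleton] at hnd hz hm
  have hzq : z ∈ q₃.support := hz.resolve_right hzx
  have hmq : m ∈ q₃.support := hm.resolve_right hmx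
  have hxq : x ∉ q₃.support := by
    intro hx
    exact hnd.2.2 x hx x (by simp) rfl
  cases q₃ with
  | nil =>
    simp only [support_nil, List.mem_singleton] at hzq
    exact hzy hzq
  | @cons y b₄ d₃ h₄ q₄ =>
    simp only [support_cons, List.mem_cons] at hzq hmq hxq
    have hynd : y ∉ q₄.support := by
      have := hnd.1
      simp only [support_cons, List.nodup_cons] at this
      exact this.1
    push_neg at hxq
    exact core_walk hginj hgc hxy q₄ hxq.2 hynd
      ⟨z, hzq.resolve_left hzy, h1, h2⟩ ⟨m, hmq.resolve_left hmy, hout⟩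


lemma edge_extreme (hginj : Injective g) (hgc : CrossFree G g)
    {u x y z : V} {p : G.Walk u u} (hp : p.IsCycle)
    (he : s(x, y) ∈ p.edges) (hz : z ∈ p.support)
    (h1 : g x < g z) (h2 : g z < g y) {m : V} (hm : m ∈ p.support)
    (hout : g m < g x ∨ g y < g m) : False := by
  have hxy : G.Adj x y := p.adj_of_mem_edges he
  have hfxy : g x < g y := h1.trans h2
  have hzx : z ≠ x := fun h => by rw [h] at h1; exact lt_irrefl _ h1
  have hzy : z ≠ y := fun h => by rw [h] at h2; exact lt_irrefl _ h2
  have hmx : m ≠ x := fun h => by subst h; rcases hout with h' | h' <;> linarith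
  have hmy : m ≠ y := fun h => by subst h; rcases hout with h' | h' <;> linarith
  have hxs : x ∈ p.support := p.fst_mem_support_of_mem_edges he
  have hp' : (p.rotate x hxs).IsCycle := hp.rotate hxs
  have hes : s(x, y) ∈ (p.rotate x hxs).edges := (p.rotate_edges x hxs).mem_iff.mpr he
  have hsupp : ∀ v, v ∈ p.support → v ∈ (p.rotate x hxs).support := by
    intro v hv
    have hv' : v ∈ p.support.tail := mem_support_tail_of_cycle p hp.ne_nil hv
    have hv'' : v ∈ (p.rotate x hxs).support.tail := (p.support_rotate x hxs).symm.mem_iff.mp hv'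
    rw [(p.rotate x hxs).support_eq_cons]
    exact List.mem_cons_of_mem _ hv''
  have hz' := hsupp z hz
  have hm' := hsupp m hm
  obtain ⟨v1, h1', q, hq⟩ := Walk.not_nil_iff.mp hp'.not_nil
  have hnd : q.support.Nodup := by
    have hh := hp'.support_nodup
    rw [hq, Walk.support_cons, List.tail_cons] at hh
    exact hh
  rw [hq, Walk.support_cons, List.mem_cons] at hz' hm'
  have hzq : z ∈ q.support := hz'.resolve_left hzx
  have hmq : m ∈ q.support := hm'.resolve_left hmx
  rw [hq, Walk.edges_cons, List.mem_cons] at hes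
  rcases hes with hfirst | hmid
  · have hyv : y = v1 := by
      rw [Sym2.eq_iff] at hfirst
      rcases hfirst with ⟨-, h'⟩ | ⟨-, h''⟩
      · exact h'
      · rw [h''] at hfxy; exact absurd hfxy (lt_irrefl _)
    subst hyv
    exact aux_cycle hginj hgc hxy q hnd hzq hmq h1 h2 hout
  · obtain ⟨hadj2, q', rfl⟩ := last_edge q hnd hmid
    rw [Walk.support_concat] at hnd hzq hmq
    simp only [List.concat_eq_append, List.nodup_append, List.mem_append,
      List.mem_singleton] at hnd hzq hmq
    have hw : G.Walk y x := (Walk.cons h1' q').reverse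
    have hwnd : ((Walk.cons h1' q').reverse).support.Nodup := by
      rw [Walk.support_reverse]
      refine List.nodup_reverse.mpr ?_
      rw [Walk.support_cons]
      refine List.nodup_cons.mpr ⟨?_, hnd.1⟩
      intro hx
      exact hnd.2.2 x hx x (by simp) rfl
    have hmemrev : ∀ v, v ∈ q'.support → v ∈ ((Walk.cons h1' q').reverse).support := by
      intro v hv
      rw [Walk.support_reverse, List.mem_reverse, Walk.support_cons]
      exact List.mem_cons_of_mem _ hv
    exact aux_cycle hginj hgc hxy ((Walk.cons h1' q').reverse) hwnd
      (hmemrev z (hzq.resolve_right hzx)) (hmemrev m (hmq.resolve_right hmx)) h1 h2 hout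


variable [Nonempty V]

noncomputable def argminOn (g : V → ℝ) (S : Finset V) : V :=
  if h : S.Nonempty then (S.exists_min_image g h).choose else Classical.arbitrary V

noncomputable def argmaxOn (g : V → ℝ) (S : Finset V) : V :=
  if h : S.Nonempty then (S.exists_max_image g h).choose else Classical.arbitrary V

lemma argminOn_mem {S : Finset V} (h : S.Nonempty) : argminOn g S ∈ S := by
  rw [argminOn, dif_pos h]; exact (S.exists_min_image g h).choose_spec.1

lemma argminOn_le {S : Finset V} (h : S.Nonempty) : ∀ b ∈ S, g (argminOn g S) ≤ g b := by
  rw [argminOn, dif_pos h]; exact (S.exists_min_image g h).choose_spec.2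

lemma argmaxOn_mem {S : Finset V} (h : S.Nonempty) : argmaxOn g S ∈ S := by
  rw [argmaxOn, dif_pos h]; exact (S.exists_max_image g h).choose_spec.1

lemma argmaxOn_ge {S : Finset V} (h : S.Nonempty) : ∀ b ∈ S, g b ≤ g (argmaxOn g S) := by
  rw [argmaxOn, dif_pos h]; exact (S.exists_max_image g h).choose_spec.2

open Classical in
noncomputable def succOn (g : V → ℝ) (S : Finset V) (a : V) : V :=
  argminOn g (S.filter fun w => g a < g w)

open Classical in
lemma succOn_spec {S : Finset V} {a : V} (hne : ∃ b ∈ S, g a < g b) :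
    succOn g S a ∈ S ∧ g a < g (succOn g S a) ∧
      ∀ w ∈ S, ¬(g a < g w ∧ g w < g (succOn g S a)) := by
  obtain ⟨b, hb, hab⟩ := hne
  have hfil : (S.filter fun w => g a < g w).Nonempty :=
    ⟨b, Finset.mem_filter.mpr ⟨hb, hab⟩⟩
  have h1 := argminOn_mem (g := g) hfil
  rw [Finset.mem_filter] at h1
  refine ⟨h1.1, h1.2, ?_⟩
  intro w hw hcon
  exact absurd (argminOn_le (g := g) hfil w (Finset.mem_filter.mpr ⟨hw, hcon.1⟩))
    (not_le.mpr hcon.2)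

lemma cycle_card_support {u : V} {p : G.Walk u u} (hp : p.IsCycle) :
    p.support.toFinset.card = p.length := by
  have h1 : p.support.toFinset = p.support.tail.toFinset := by
    ext v
    simp only [List.mem_toFinset]
    exact ⟨fun h => mem_support_tail_of_cycle p hp.ne_nil h, fun h => List.mem_of_mem_tail h⟩
  rw [h1, List.toFinset_card_of_nodup hp.support_nodup, List.length_tail, p.length_support]
  omega

theorem cycle_structure (hginj : Injective g) (hgc : CrossFree G g)
    {u : V} {p : G.Walk u u} (hp : p.IsCycle) :
    p.edges.toFinset =
      ((p.support.toFinset.erase (argmaxOn g p.support.toFinset)).image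
        (fun a => s(a, succOn g p.support.toFinset a))) ∪
      {s(argminOn g p.support.toFinset, argmaxOn g p.support.toFinset)} := by
  classical
  set S := p.support.toFinset with hSdef
  set A := argminOn g S with hAdef
  set B := argmaxOn g S with hBdef
  have hmemS : ∀ {v : V}, v ∈ S ↔ v ∈ p.support := fun {v} => List.mem_toFinset
  have hSne : S.Nonempty := ⟨u, hmemS.mpr p.start_mem_support⟩
  have hA : A ∈ S := argminOn_mem hSne
  have hB : B ∈ S := argmaxOn_mem hSne
  have hAle : ∀ v ∈ S, g A ≤ g v := argminOn_le hSne
  have hBge : ∀ v ∈ S, g v ≤ g B := argmaxOn_ge hSne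
  have hcardS : S.card = p.length := cycle_card_support hp
  have h3 : 3 ≤ p.length := hp.three_le_length
  have hAB : A ≠ B := by
    intro hABeq
    have hcard1 : S.card ≤ 1 := by
      refine Finset.card_le_one.mpr ?_
      intro v hv w hw
      apply hginj
      have h1 := hAle v hv; have h2 := hBge v hv
      have h3' := hAle w hw; have h4 := hBge w hw
      rw [← hABeq] at h2 h4
      linarith
    omega
  have key : ∀ a b : V, s(a, b) ∈ p.edges → g a < g b →
      s(a, b) ∈ ((S.erase B).image (fun a => s(a, succOn g S a))) ∪ {s(A, B)} := by
    intro a b heab hab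
    have ha : a ∈ S := hmemS.mpr (p.fst_mem_support_of_mem_edges heab)
    have hb : b ∈ S := hmemS.mpr (p.snd_mem_support_of_mem_edges heab)
    by_cases hzz : ∃ z ∈ S, g a < g z ∧ g z < g b
    · obtain ⟨z, hzS, hz1, hz2⟩ := hzz
      have hbound : ∀ v ∈ p.support, g a ≤ g v ∧ g v ≤ g b := by
        intro v hv
        constructor
        · by_contra hlt
          push_neg at hlt
          exact edge_extreme hginj hgc hp heab (hmemS.mp hzS) hz1 hz2 hv (Or.inl hlt)
        · by_contra hlt
          push_neg at hlt
          exact edge_extreme hginj hgc hp heab (hmemS.mp hzS) hz1 hz2 hv (Or.inr hlt)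
      have haA : a = A :=
        hginj (le_antisymm (hbound A (hmemS.mp hA)).1 (hAle a ha))
      have hbB : b = B :=
        hginj (le_antisymm (hBge b hb) (hbound B (hmemS.mp hB)).2)
      rw [haA, hbB]
      exact Finset.mem_union_right _ (Finset.mem_singleton_self _)
    · have hsp := succOn_spec (g := g) (S := S) (a := a) ⟨b, hb, hab⟩
      obtain ⟨hs1, hs2, hs3⟩ := hsp
      have hbs : b = succOn g S a := by
        by_contra hne'
        have hgne : g (succOn g S a) ≠ g b := fun h => hne' (hginj h).symm
        rcases hgne.lt_or_gt with hlt | hlt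
        · exact hzz ⟨succOn g S a, hs1, hs2, hlt⟩
        · exact hs3 b hb ⟨hab, hlt⟩
      have haB : a ≠ B := by
        intro h
        have : g b ≤ g B := hBge b hb
        rw [← h] at this
        linarith
      exact Finset.mem_union_left _
        (Finset.mem_image.mpr ⟨a, Finset.mem_erase.mpr ⟨haB, ha⟩, by rw [hbs]⟩)
  apply Finset.eq_of_subset_of_card_le
  · intro e he
    have he' : e ∈ p.edges := List.mem_toFinset.mp he
    have hrep : ∃ a b, e = s(a, b) ∧ g a < g b := by
      clear he
      induction e using Sym2.ind with
      | _ a b =>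
        have hadj : G.Adj a b := p.adj_of_mem_edges he'
        have hne : g a ≠ g b := fun h => hadj.ne (hginj h)
        rcases hne.lt_or_gt with h | h
        · exact ⟨a, b, rfl, h⟩
        · exact ⟨b, a, Sym2.eq_swap, h⟩
    obtain ⟨a, b, rfl, hab⟩ := hrep
    exact key a b he' hab
  · have hciE : p.edges.toFinset.card = p.length := by
      rw [List.toFinset_card_of_nodup hp.edges_nodup, p.length_edges]
    have h1 : ((S.erase B).image (fun a => s(a, succOn g S a))).card ≤ S.card - 1 := by
      refine le_trans (Finset.card_image_le) ?_
      rw [Finset.card_erase_of_mem hB]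
    calc (((S.erase B).image (fun a => s(a, succOn g S a))) ∪ {s(A, B)}).card
        ≤ ((S.erase B).image (fun a => s(a, succOn g S a))).card + 1 := by
          refine le_trans (Finset.card_union_le _ _) ?_
          simp
      _ ≤ S.card - 1 + 1 := by omega
      _ ≤ p.edges.toFinset.card := by omega

lemma cycle_long_edge (hginj : Injective g) (hgc : CrossFree G g)
    {u : V} {p : G.Walk u u} (hp : p.IsCycle) :
    s(argminOn g p.support.toFinset, argmaxOn g p.support.toFinset) ∈ p.edges := by
  rw [← List.mem_toFinset, cycle_structure hginj hgc hp]
  exact Finset.mem_union_right _ (Finset.mem_singleton_self _)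

lemma cycle_succ_edge (hginj : Injective g) (hgc : CrossFree G g)
    {u : V} {p : G.Walk u u} (hp : p.IsCycle) {a : V} (ha : a ∈ p.support.toFinset)
    (haB : a ≠ argmaxOn g p.support.toFinset) :
    s(a, succOn g p.support.toFinset a) ∈ p.edges := by
  rw [← List.mem_toFinset, cycle_structure hginj hgc hp]
  exact Finset.mem_union_left _
    (Finset.mem_image.mpr ⟨a, Finset.mem_erase.mpr ⟨haB, ha⟩, rfl⟩)

lemma edges_eq_of_support_eq (hginj : Injective g) (hgc : CrossFree G g)
    {u w : V} {p : G.Walk u u} {q : G.Walk w w} (hp : p.IsCycle) (hq : q.IsCycle)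
    (hS : p.support.toFinset = q.support.toFinset) :
    p.edges.toFinset = q.edges.toFinset := by
  rw [cycle_structure hginj hgc hp, cycle_structure hginj hgc hq, hS]

lemma edge_bounds (hginj : Injective g) (hgc : CrossFree G g)
    {u : V} {p : G.Walk u u} (hp : p.IsCycle) {a b z : V}
    (he : s(a, b) ∈ p.edges) (hz : z ∈ p.support) (h1 : g a < g z) (h2 : g z < g b) :
    ∀ v ∈ p.support, g a ≤ g v ∧ g v ≤ g b := by
  intro v hv
  constructor
  · by_contra hlt; push_neg at hlt
    exact edge_extreme hginj hgc hp he hz h1 h2 hv (Or.inl hlt)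
  · by_contra hlt; push_neg at hlt
    exact edge_extreme hginj hgc hp he hz h1 h2 hv (Or.inr hlt)

lemma cycle_pred_edge (hginj : Injective g) (hgc : CrossFree G g)
    {u : V} {p : G.Walk u u} (hp : p.IsCycle) {v : V} (hv : v ∈ p.support.toFinset)
    (hvA : v ≠ argminOn g p.support.toFinset) :
    ∃ b ∈ p.support.toFinset, s(b, v) ∈ p.edges ∧ g b < g v ∧
      ∀ w ∈ p.support.toFinset, ¬(g b < g w ∧ g w < g v) := by
  classical
  set S := p.support.toFinset with hSdef
  set A := argminOn g S with hAdef
  have hSne : S.Nonempty := ⟨v, hv⟩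
  have hA : A ∈ S := argminOn_mem hSne
  have hAv : g A < g v :=
    lt_of_le_of_ne (argminOn_le hSne v hv) (fun h => hvA (hginj h).symm)
  have hLne : (S.filter fun w => g w < g v).Nonempty :=
    ⟨A, Finset.mem_filter.mpr ⟨hA, hAv⟩⟩
  set a := argmaxOn g (S.filter fun w => g w < g v) with hadef
  have haf := argmaxOn_mem (g := g) hLne
  rw [Finset.mem_filter] at haf
  obtain ⟨haS, hav⟩ := haf
  have hamax : ∀ w ∈ S, g w < g v → g w ≤ g a := fun w hw hwv =>
    argmaxOn_ge (g := g) hLne w (Finset.mem_filter.mpr ⟨hw, hwv⟩)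
  have hsp := succOn_spec (g := g) (S := S) (a := a) ⟨v, hv, hav⟩
  obtain ⟨hs1, hs2, hs3⟩ := hsp
  have hsv : succOn g S a = v := by
    have hle : g (succOn g S a) ≤ g v := by
      by_contra hlt
      push_neg at hlt
      exact hs3 v hv ⟨hav, hlt⟩
    rcases lt_or_eq_of_le hle with hlt | heq
    · exact absurd (hamax _ hs1 hlt) (not_le.mpr hs2)
    · exact hginj heq
  have haB : a ≠ argmaxOn g S := by
    intro h
    have := argmaxOn_ge (g := g) hSne v hv
    rw [← h] at this
    linarith
  refine ⟨a, haS, ?_, hav, ?_⟩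
  · have := cycle_succ_edge hginj hgc hp haS haB
    rwa [hsv] at this
  · intro w hw
    rw [← hsv]
    exact hs3 w hw


lemma gap_lemma (hginj : Injective g) (hgc : CrossFree G g)
    {w : V} {q : G.Walk w w} (hq : q.IsCycle)
    {u₀ : V} (hu₀ : u₀ ∉ q.support)
    (h1 : g (argminOn g q.support.toFinset) < g u₀)
    (h2 : g u₀ < g (argmaxOn g q.support.toFinset)) :
    ∃ a s', a ∈ q.support.toFinset ∧ s' ∈ q.support.toFinset ∧ s(a, s') ∈ q.edges ∧
      g a < g u₀ ∧ g u₀ < g s' ∧ ∀ v ∈ q.support.toFinset, ¬(g a < g v ∧ g v < g s') := by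
  classical
  set S := q.support.toFinset with hSdef
  set A := argminOn g S with hAdef
  set B := argmaxOn g S with hBdef
  have hSne : S.Nonempty := ⟨w, List.mem_toFinset.mpr q.start_mem_support⟩
  have hA : A ∈ S := argminOn_mem hSne
  have hB : B ∈ S := argmaxOn_mem hSne
  have hLne : (S.filter fun v => g v < g u₀).Nonempty :=
    ⟨A, Finset.mem_filter.mpr ⟨hA, h1⟩⟩
  set a := argmaxOn g (S.filter fun v => g v < g u₀) with hadef
  have haf := argmaxOn_mem (g := g) hLne
  rw [Finset.mem_filter] at haf
  obtain ⟨haS, hau⟩ := haf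
  have hamax : ∀ v ∈ S, g v < g u₀ → g v ≤ g a := fun v hv hvu =>
    argmaxOn_ge (g := g) hLne v (Finset.mem_filter.mpr ⟨hv, hvu⟩)
  have haB : g a < g B := hau.trans h2
  have hsp := succOn_spec (g := g) (S := S) (a := a) ⟨B, hB, haB⟩
  obtain ⟨hs1, hs2, hs3⟩ := hsp
  have hane : a ≠ B := fun h => by rw [h] at haB; exact lt_irrefl _ haB
  have hedge : s(a, succOn g S a) ∈ q.edges := cycle_succ_edge hginj hgc hq haS hane
  have hus : g u₀ < g (succOn g S a) := by
    have hne' : g (succOn g S a) ≠ g u₀ := by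
      intro h
      exact hu₀ (List.mem_toFinset.mp ((hginj h) ▸ hs1))
    rcases hne'.lt_or_gt with hlt | hlt
    · exact absurd (hamax _ hs1 hlt) (not_le.mpr hs2)
    · exact hlt
  exact ⟨a, succOn g S a, haS, hs1, hedge, hau, hus, hs3⟩

lemma subset_case (hginj : Injective g) (hgc : CrossFree G g)
    {u w : V} {p : G.Walk u u} {q : G.Walk w w} (hp : p.IsCycle) (hq : q.IsCycle)
    (hcp : Chordless G p)
    (hsub : q.support.toFinset ⊆ p.support.toFinset) :
    p.edges.toFinset = q.edges.toFinset := by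
  classical
  by_cases hss : p.support.toFinset ⊆ q.support.toFinset
  · exact edges_eq_of_support_eq hginj hgc hp hq (Finset.Subset.antisymm hss hsub)
  exfalso
  obtain ⟨u₀, hu₀p, hu₀q⟩ := Finset.not_subset.mp hss
  set Sq := q.support.toFinset with hSqdef
  set Aq := argminOn g Sq with hAqdef
  set Bq := argmaxOn g Sq with hBqdef
  have hSqne : Sq.Nonempty := ⟨w, List.mem_toFinset.mpr q.start_mem_support⟩
  have hAq : Aq ∈ Sq := argminOn_mem hSqne
  have hBq : Bq ∈ Sq := argmaxOn_mem hSqne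
  have hAqle : ∀ v ∈ Sq, g Aq ≤ g v := argminOn_le hSqne
  have hBqge : ∀ v ∈ Sq, g v ≤ g Bq := argmaxOn_ge hSqne
  -- a third vertex of q strictly between
  have hcard : 3 ≤ Sq.card := by
    rw [cycle_card_support hq]; exact hq.three_le_length
  have hAB : Aq ≠ Bq := by
    intro hABeq
    have hcard1 : Sq.card ≤ 1 := by
      refine Finset.card_le_one.mpr ?_
      intro v hv w' hw'
      apply hginj
      have := hAqle v hv; have := hBqge v hv
      have := hAqle w' hw'; have := hBqge w' hw'
      rw [← hABeq] at *
      linarith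
    omega
  have hzex : ((Sq.erase Aq).erase Bq).Nonempty := by
    rw [← Finset.card_pos, Finset.card_erase_of_mem
      (Finset.mem_erase.mpr ⟨hAB.symm, hBq⟩), Finset.card_erase_of_mem hAq]
    omega
  obtain ⟨z, hz⟩ := hzex
  rw [Finset.mem_erase, Finset.mem_erase] at hz
  obtain ⟨hzB, hzA, hzS⟩ := hz
  have hz1 : g Aq < g z := lt_of_le_of_ne (hAqle z hzS) (fun h => hzA (hginj h).symm)
  have hz2 : g z < g Bq := lt_of_le_of_ne (hBqge z hzS) (fun h => hzB (hginj h))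
  -- the long edge of q is a chord of p
  have hLq : s(Aq, Bq) ∈ q.edges := cycle_long_edge hginj hgc hq
  have hadjq : G.Adj Aq Bq := q.adj_of_mem_edges hLq
  have hAqp : Aq ∈ p.support := List.mem_toFinset.mp (hsub hAq)
  have hBqp : Bq ∈ p.support := List.mem_toFinset.mp (hsub hBq)
  have hLqp : s(Aq, Bq) ∈ p.edges := hcp Aq hAqp Bq hBqp hadjq
  have hzp : z ∈ p.support := List.mem_toFinset.mp (hsub hzS)
  have hbounds := edge_bounds hginj hgc hp hLqp hzp hz1 hz2
  -- u₀ is strictly inside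
  have hu₀sup : u₀ ∈ p.support := List.mem_toFinset.mp hu₀p
  have hu₀b := hbounds u₀ hu₀sup
  have hu₀A : g Aq < g u₀ :=
    lt_of_le_of_ne hu₀b.1 (fun h => hu₀q ((hginj h) ▸ hAq))
  have hu₀B : g u₀ < g Bq :=
    lt_of_le_of_ne hu₀b.2 (fun h => hu₀q ((hginj h).symm ▸ hBq))
  -- gap of q containing u₀
  obtain ⟨a, s', haS, hs'S, hge, hau, hus, hgap⟩ :=
    gap_lemma hginj hgc hq (fun h => hu₀q (List.mem_toFinset.mpr h)) hu₀A hu₀B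
  -- this gap edge is a chord of p
  have hadj_as : G.Adj a s' := q.adj_of_mem_edges hge
  have hap : a ∈ p.support := List.mem_toFinset.mp (hsub haS)
  have hs'p : s' ∈ p.support := List.mem_toFinset.mp (hsub hs'S)
  have hchord : s(a, s') ∈ p.edges := hcp a hap s' hs'p hadj_as
  have hbounds2 := edge_bounds hginj hgc hp hchord hu₀sup hau hus
  -- hence a = Aq and s' = Bq
  have haAq : a = Aq := hginj (le_antisymm ((hbounds2 Aq hAqp).1) (hAqle a haS))
  have hs'Bq : s' = Bq := hginj (le_antisymm (hBqge s' hs'S) ((hbounds2 Bq hBqp).2))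
  exact hgap z hzS ⟨haAq ▸ hz1, hs'Bq ▸ hz2⟩


lemma step2 (hginj : Injective g) (hgc : CrossFree G g)
    {u w : V} {p : G.Walk u u} {q : G.Walk w w} (hp : p.IsCycle) (hq : q.IsCycle)
    (hcp : Chordless G p)
    {v1 v2 w1 w2 : V}
    (he1p : s(v1, v2) ∈ p.edges) (he1q : s(v1, v2) ∈ q.edges)
    (he2p : s(w1, w2) ∈ p.edges) (he2q : s(w1, w2) ∈ q.edges)
    (hee : s(v1, v2) ≠ s(w1, w2))
    {u₀ : V} (hu₀p : u₀ ∈ p.support) (hu₀q : u₀ ∉ q.support) :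
    g u₀ < g (argminOn g q.support.toFinset) ∨
      g (argmaxOn g q.support.toFinset) < g u₀ := by
  classical
  by_contra hcon
  push_neg at hcon
  obtain ⟨hconA, hconB⟩ := hcon
  set Sq := q.support.toFinset with hSqdef
  set Aq := argminOn g Sq with hAqdef
  set Bq := argmaxOn g Sq with hBqdef
  set Sp := p.support.toFinset with hSpdef
  set Ap := argminOn g Sp with hApdef
  set Bp := argmaxOn g Sp with hBpdef
  have hSqne : Sq.Nonempty := ⟨w, List.mem_toFinset.mpr q.start_mem_support⟩
  have hSpne : Sp.Nonempty := ⟨u, List.mem_toFinset.mpr p.start_mem_support⟩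
  have hAq : Aq ∈ Sq := argminOn_mem hSqne
  have hBq : Bq ∈ Sq := argmaxOn_mem hSqne
  have hAp : Ap ∈ Sp := argminOn_mem hSpne
  have hBp : Bp ∈ Sp := argmaxOn_mem hSpne
  have hAple : ∀ v ∈ Sp, g Ap ≤ g v := argminOn_le hSpne
  have hBpge : ∀ v ∈ Sp, g v ≤ g Bp := argmaxOn_ge hSpne
  have hu₀Sp : u₀ ∈ Sp := List.mem_toFinset.mpr hu₀p
  have hu₀A : g Aq < g u₀ :=
    lt_of_le_of_ne hconA (fun h => hu₀q (List.mem_toFinset.mp ((hginj h) ▸ hAq)))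
  have hu₀B : g u₀ < g Bq :=
    lt_of_le_of_ne hconB (fun h => hu₀q (List.mem_toFinset.mp ((hginj h).symm ▸ hBq)))
  obtain ⟨a, s', haS, hs'S, hge, hau, hus, hgap⟩ :=
    gap_lemma hginj hgc hq hu₀q hu₀A hu₀B
  have hadj_as : G.Adj a s' := q.adj_of_mem_edges hge
  have hv1p : v1 ∈ p.support := p.fst_mem_support_of_mem_edges he1p
  have hv2p : v2 ∈ p.support := p.snd_mem_support_of_mem_edges he1p
  have hv1q : v1 ∈ q.support := q.fst_mem_support_of_mem_edges he1q
  have hv2q : v2 ∈ q.support := q.snd_mem_support_of_mem_edges he1q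
  have hw1p : w1 ∈ p.support := p.fst_mem_support_of_mem_edges he2p
  have hw2p : w2 ∈ p.support := p.snd_mem_support_of_mem_edges he2p
  have hw1q : w1 ∈ q.support := q.fst_mem_support_of_mem_edges he2q
  have hw2q : w2 ∈ q.support := q.snd_mem_support_of_mem_edges he2q
  have hv12 : v1 ≠ v2 := (p.adj_of_mem_edges he1p).ne
  have hw12 : w1 ≠ w2 := (p.adj_of_mem_edges he2p).ne
  -- the two one-sided derivations
  have minside : ¬(g a < g Ap ∧ g Ap < g s') → a ∈ p.support := by
    intro hnA
    have hAp_lt_s' : g Ap < g s' := lt_of_le_of_lt (hAple u₀ hu₀Sp) hus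
    have hAp_le_a : g Ap ≤ g a := by
      by_contra hlt
      push_neg at hlt
      exact hnA ⟨hlt, hAp_lt_s'⟩
    have hTne : (Sp.filter fun v => g a < g v ∧ g v < g s').Nonempty :=
      ⟨u₀, Finset.mem_filter.mpr ⟨hu₀Sp, hau, hus⟩⟩
    have hs₀f := argminOn_mem (g := g) hTne
    rw [Finset.mem_filter] at hs₀f
    obtain ⟨hs₀Sp, hs₀a, hs₀s'⟩ := hs₀f
    have hs₀min : ∀ v ∈ Sp, (g a < g v ∧ g v < g s') →
        g (argminOn g (Sp.filter fun v => g a < g v ∧ g v < g s')) ≤ g v :=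
      fun v hv hvI => argminOn_le hTne v (Finset.mem_filter.mpr ⟨hv, hvI⟩)
    have hs₀Ap : argminOn g (Sp.filter fun v => g a < g v ∧ g v < g s') ≠ Ap := by
      intro h
      rw [h] at hs₀a
      linarith
    obtain ⟨b, hbSp, hedgeb, hblt, hnb⟩ := cycle_pred_edge hginj hgc hp hs₀Sp hs₀Ap
    have hbIns : ¬(g a < g b ∧ g b < g s') := fun hIns =>
      absurd (hs₀min b hbSp hIns) (not_le.mpr hblt)
    have hb_le_a : g b ≤ g a := by
      by_contra hlt'
      push_neg at hlt'
      exact hbIns ⟨hlt', hblt.trans hs₀s'⟩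
    rcases lt_or_eq_of_le hb_le_a with hlt' | heq
    · exact (hgc b _ a s' (p.adj_of_mem_edges hedgeb) hadj_as hlt' hs₀a hs₀s').elim
    · have hba : b = a := hginj heq
      rw [← hba]
      exact List.mem_toFinset.mp hbSp
  have maxside : ¬(g a < g Bp ∧ g Bp < g s') → s' ∈ p.support := by
    intro hnB
    have ha_lt_Bp : g a < g Bp := lt_of_lt_of_le hau (hBpge u₀ hu₀Sp)
    have hs'_le_Bp : g s' ≤ g Bp := by
      by_contra hlt
      push_neg at hlt
      exact hnB ⟨ha_lt_Bp, hlt⟩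
    have hTne : (Sp.filter fun v => g a < g v ∧ g v < g s').Nonempty :=
      ⟨u₀, Finset.mem_filter.mpr ⟨hu₀Sp, hau, hus⟩⟩
    have ht₀f := argmaxOn_mem (g := g) hTne
    rw [Finset.mem_filter] at ht₀f
    obtain ⟨ht₀Sp, ht₀a, ht₀s'⟩ := ht₀f
    have ht₀max : ∀ v ∈ Sp, (g a < g v ∧ g v < g s') →
        g v ≤ g (argmaxOn g (Sp.filter fun v => g a < g v ∧ g v < g s')) :=
      fun v hv hvI => argmaxOn_ge hTne v (Finset.mem_filter.mpr ⟨hv, hvI⟩)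
    have ht₀Bp : argmaxOn g (Sp.filter fun v => g a < g v ∧ g v < g s') ≠ Bp := by
      intro h
      rw [h] at ht₀s'
      linarith
    have hsp := succOn_spec (g := g) (S := Sp)
      (a := argmaxOn g (Sp.filter fun v => g a < g v ∧ g v < g s'))
      ⟨Bp, hBp, by linarith⟩
    obtain ⟨hcSp, htc, hnc⟩ := hsp
    have hedgec := cycle_succ_edge hginj hgc hp ht₀Sp ht₀Bp
    have hcIns : ¬(g a < g (succOn g Sp (argmaxOn g (Sp.filter fun v => g a < g v ∧ g v < g s'))) ∧
        g (succOn g Sp (argmaxOn g (Sp.filter fun v => g a < g v ∧ g v < g s'))) < g s') :=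
      fun hIns => absurd (ht₀max _ hcSp hIns) (not_le.mpr htc)
    have ha_lt_c := ht₀a.trans htc
    have hs'_le_c : g s' ≤ g (succOn g Sp (argmaxOn g (Sp.filter fun v => g a < g v ∧ g v < g s'))) := by
      by_contra hlt
      push_neg at hlt
      exact hcIns ⟨ha_lt_c, hlt⟩
    rcases lt_or_eq_of_le hs'_le_c with hlt | heq
    · exact (hgc a s' _ _ hadj_as (p.adj_of_mem_edges hedgec) ht₀a ht₀s' hlt).elim
    · have hsc : s' = _ := hginj heq
      rw [hsc]
      exact List.mem_toFinset.mp hcSp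
  by_cases hA : g a < g Ap ∧ g Ap < g s' <;> by_cases hB : g a < g Bp ∧ g Bp < g s'
  · -- both extremes inside the gap: endpoint v1 must be inside, contradiction
    refine hgap v1 (List.mem_toFinset.mpr hv1q) ?_
    have h1 := hAple v1 (List.mem_toFinset.mpr hv1p)
    have h2 := hBpge v1 (List.mem_toFinset.mpr hv1p)
    exact ⟨lt_of_lt_of_le hA.1 h1, lt_of_le_of_lt h2 hB.2⟩
  · -- Ap inside, Bp outside
    have hs'p := maxside hB
    have ha_lt_Bp : g a < g Bp := lt_of_lt_of_le hau (hBpge u₀ hu₀Sp)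
    have hs'_le_Bp : g s' ≤ g Bp := by
      by_contra hlt
      push_neg at hlt
      exact hB ⟨ha_lt_Bp, hlt⟩
    have hLp : s(Ap, Bp) ∈ p.edges := cycle_long_edge hginj hgc hp
    have hadjp : G.Adj Ap Bp := p.adj_of_mem_edges hLp
    rcases lt_or_eq_of_le hs'_le_Bp with hlt | heq
    · exact (hgc a s' Ap Bp hadj_as hadjp hA.1 hA.2 hlt).elim
    · have hs'Bp : s' = Bp := hginj heq
      have key : ∀ v, v ∈ p.support → v ∈ q.support → v = s' := by
        intro v hvp hvq
        have h2' : g v ≤ g s' := by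
          rw [hs'Bp]
          exact hBpge v (List.mem_toFinset.mpr hvp)
        have h1' : g a < g v := lt_of_lt_of_le hA.1 (hAple v (List.mem_toFinset.mpr hvp))
        have hni := hgap v (List.mem_toFinset.mpr hvq)
        rcases lt_or_eq_of_le h2' with h' | h'
        · exact absurd ⟨h1', h'⟩ hni
        · exact hginj h'
      exact hv12 ((key v1 hv1p hv1q).trans (key v2 hv2p hv2q).symm)
  · -- Ap outside, Bp inside
    have hap := minside hA
    have hAp_lt_s' : g Ap < g s' := lt_of_le_of_lt (hAple u₀ hu₀Sp) hus
    have hAp_le_a : g Ap ≤ g a := by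
      by_contra hlt
      push_neg at hlt
      exact hA ⟨hlt, hAp_lt_s'⟩
    have hLp : s(Ap, Bp) ∈ p.edges := cycle_long_edge hginj hgc hp
    have hadjp : G.Adj Ap Bp := p.adj_of_mem_edges hLp
    rcases lt_or_eq_of_le hAp_le_a with hlt | heq
    · exact (hgc Ap Bp a s' hadjp hadj_as hlt hB.1 hB.2).elim
    · have haAp : Ap = a := hginj heq
      have key : ∀ v, v ∈ p.support → v ∈ q.support → v = a := by
        intro v hvp hvq
        have h1' : g a ≤ g v := by
          rw [← haAp]
          exact hAple v (List.mem_toFinset.mpr hvp)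
        have h2' : g v < g s' := lt_of_le_of_lt (hBpge v (List.mem_toFinset.mpr hvp)) hB.2
        have hni := hgap v (List.mem_toFinset.mpr hvq)
        rcases lt_or_eq_of_le h1' with h' | h'
        · exact absurd ⟨h', h2'⟩ hni
        · exact (hginj h').symm
      exact hv12 ((key v1 hv1p hv1q).trans (key v2 hv2p hv2q).symm)
  · -- both outside: the gap edge is a chord of p
    have hap := minside hA
    have hs'p := maxside hB
    have hchord : s(a, s') ∈ p.edges := hcp a hap s' hs'p hadj_as
    have hbounds := edge_bounds hginj hgc hp hchord hu₀p hau hus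
    have key : ∀ v, v ∈ p.support → v ∈ q.support → v = a ∨ v = s' := by
      intro v hvp hvq
      have hb := hbounds v hvp
      have hni := hgap v (List.mem_toFinset.mpr hvq)
      rcases lt_or_eq_of_le hb.1 with h' | h'
      · rcases lt_or_eq_of_le hb.2 with h'' | h''
        · exact absurd ⟨h', h''⟩ hni
        · exact Or.inr (hginj h'')
      · exact Or.inl (hginj h').symm
    have he1 : s(v1, v2) = s(a, s') := by
      rcases key v1 hv1p hv1q with h1' | h1' <;> rcases key v2 hv2p hv2q with h2' | h2'
      · exact (hv12 (h1'.trans h2'.symm)).elim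
      · rw [h1', h2']
      · rw [h1', h2']; exact Sym2.eq_swap
      · exact (hv12 (h1'.trans h2'.symm)).elim
    have he2 : s(w1, w2) = s(a, s') := by
      rcases key w1 hw1p hw1q with h1' | h1' <;> rcases key w2 hw2p hw2q with h2' | h2'
      · exact (hw12 (h1'.trans h2'.symm)).elim
      · rw [h1', h2']
      · rw [h1', h2']; exact Sym2.eq_swap
      · exact (hw12 (h1'.trans h2'.symm)).elim
    exact hee (he1.trans he2.symm)


lemma crossfree_of_outerplanar {f : V ↪ ℝ}
    (hf : ∀ a b c d, G.Adj a b → G.Adj c d →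
      a ≠ c → a ≠ d → b ≠ c → b ≠ d → ¬ chordsCross (f a) (f b) (f c) (f d)) :
    CrossFree G (fun v => f v) := by
  intro a b c d hab hcd h1 h2 h3
  have h1' : (f a : ℝ) < f c := h1
  have h2' : (f c : ℝ) < f b := h2
  have h3' : (f b : ℝ) < f d := h3
  have hab2 : (f a : ℝ) < f b := h1'.trans h2'
  have hcd2 : (f c : ℝ) < f d := h2'.trans h3'
  refine hf a b c d hab hcd ?_ ?_ ?_ ?_ ?_
  · intro h; rw [h] at h1'; linarith
  · intro h; rw [h] at h1'; linarith
  · intro h; rw [h] at h2'; linarith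
  · intro h; rw [h] at h3'; linarith
  · exact Or.inl ⟨by rw [min_eq_left hab2.le, min_eq_left hcd2.le]; exact h1',
      by rw [min_eq_left hcd2.le, max_eq_right hab2.le]; exact h2',
      by rw [max_eq_right hab2.le, max_eq_right hcd2.le]; exact h3'⟩


end OPAux
-- ===== end auxiliary development =====

/-- In a biconnected outerplanar graph, every pair of (distinct) basic cycles, i.e.
boundaries of bounded faces — equivalently, chordless cycles — has at most one edge
in common. -/
theorem outerplanar_basic_cycles_share_at_most_one_edge
    {V : Type*} [Fintype V] [DecidableEq V] (G : SimpleGraph V)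
    (hconn : G.Connected) (h3 : 3 ≤ Fintype.card V)
    (hnocut : ∀ v, ¬ IsCutvertex G v) (hop : Outerplanar G)
    {u w : V} (p : G.Walk u u) (q : G.Walk w w)
    (hp : p.IsCycle) (hq : q.IsCycle)
    (hcp : Chordless G p) (hcq : Chordless G q)
    (hne : p.edges.toFinset ≠ q.edges.toFinset) :
    (p.edges.toFinset ∩ q.edges.toFinset).card ≤ 1 := by
  classical
  by_contra hcard
  push_neg at hcard
  obtain ⟨e1, he1, e2, he2, hee⟩ := Finset.one_lt_card.mp hcard
  obtain ⟨f, hf⟩ := hop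
  haveI : Nonempty V := Fintype.card_pos_iff.mp (by omega)
  have hginj : Function.Injective (fun v => (f v : ℝ)) := f.injective
  have hgc : OPAux.CrossFree G (fun v => (f v : ℝ)) := OPAux.crossfree_of_outerplanar hf
  rw [Finset.mem_inter] at he1 he2
  have he1p : e1 ∈ p.edges := List.mem_toFinset.mp he1.1
  have he1q : e1 ∈ q.edges := List.mem_toFinset.mp he1.2
  have he2p : e2 ∈ p.edges := List.mem_toFinset.mp he2.1
  have he2q : e2 ∈ q.edges := List.mem_toFinset.mp he2.2
  have hns1 : ¬ q.support.toFinset ⊆ p.support.toFinset := fun hs =>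
    hne (OPAux.subset_case hginj hgc hp hq hcp hs)
  have hns2 : ¬ p.support.toFinset ⊆ q.support.toFinset := fun hs =>
    hne (OPAux.subset_case hginj hgc hq hp hcq hs).symm
  obtain ⟨u₀, hu₀p, hu₀q⟩ := Finset.not_subset.mp hns2
  obtain ⟨w₀, hw₀q, hw₀p⟩ := Finset.not_subset.mp hns1
  obtain ⟨v1, v2, rfl⟩ : ∃ a b, e1 = s(a, b) := by
    induction e1 using Sym2.ind with | _ a b => exact ⟨a, b, rfl⟩
  obtain ⟨w1, w2, rfl⟩ : ∃ a b, e2 = s(a, b) := by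
    induction e2 using Sym2.ind with | _ a b => exact ⟨a, b, rfl⟩
  have hstep_pq := OPAux.step2 hginj hgc hp hq hcp he1p he1q he2p he2q hee
    (List.mem_toFinset.mp hu₀p) (fun h => hu₀q (List.mem_toFinset.mpr h))
  have hstep_qp := OPAux.step2 hginj hgc hq hp hcq he1q he1p he2q he2p hee
    (List.mem_toFinset.mp hw₀q) (fun h => hw₀p (List.mem_toFinset.mpr h))
  -- abbreviate g
  set g : V → ℝ := fun v => (f v : ℝ) with hgdef
  have hSpne : p.support.toFinset.Nonempty := ⟨u, List.mem_toFinset.mpr p.start_mem_support⟩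
  have hSqne : q.support.toFinset.Nonempty := ⟨w, List.mem_toFinset.mpr q.start_mem_support⟩
  have hAple : ∀ v ∈ p.support.toFinset, g (OPAux.argminOn g p.support.toFinset) ≤ g v :=
    OPAux.argminOn_le hSpne
  have hBpge : ∀ v ∈ p.support.toFinset, g v ≤ g (OPAux.argmaxOn g p.support.toFinset) :=
    OPAux.argmaxOn_ge hSpne
  have hAqle : ∀ v ∈ q.support.toFinset, g (OPAux.argminOn g q.support.toFinset) ≤ g v :=
    OPAux.argminOn_le hSqne
  have hBqge : ∀ v ∈ q.support.toFinset, g v ≤ g (OPAux.argmaxOn g q.support.toFinset) :=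
    OPAux.argmaxOn_ge hSqne
  have hLp : s(OPAux.argminOn g p.support.toFinset, OPAux.argmaxOn g p.support.toFinset) ∈ p.edges :=
    OPAux.cycle_long_edge hginj hgc hp
  have hLq : s(OPAux.argminOn g q.support.toFinset, OPAux.argmaxOn g q.support.toFinset) ∈ q.edges :=
    OPAux.cycle_long_edge hginj hgc hq
  have hadjp := p.adj_of_mem_edges hLp
  have hadjq := q.adj_of_mem_edges hLq
  -- endpoint bounds
  have hv1p := List.mem_toFinset.mpr (p.fst_mem_support_of_mem_edges he1p)
  have hv2p := List.mem_toFinset.mpr (p.snd_mem_support_of_mem_edges he1p)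
  have hv1q := List.mem_toFinset.mpr (q.fst_mem_support_of_mem_edges he1q)
  have hv2q := List.mem_toFinset.mpr (q.snd_mem_support_of_mem_edges he1q)
  have hb1 := hAple v1 hv1p
  have hb2 := hAple v2 hv2p
  have hb3 := hBpge v1 hv1p
  have hb4 := hBpge v2 hv2p
  have hb5 := hAqle v1 hv1q
  have hb6 := hAqle v2 hv2q
  have hb7 := hBqge v1 hv1q
  have hb8 := hBqge v2 hv2q
  have hv12 : g v1 ≠ g v2 := fun h => (p.adj_of_mem_edges he1p).ne (hginj h)
  have hu₀b1 := hAple u₀ hu₀p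
  have hu₀b2 := hBpge u₀ hu₀p
  have hw₀b1 := hAqle w₀ hw₀q
  have hw₀b2 := hBqge w₀ hw₀q
  rcases hstep_pq with h | h <;> rcases hstep_qp with h' | h'
  · -- g u₀ < g Aq  and  g w₀ < g Ap : contradiction
    linarith
  · -- g Ap < g Aq and g Bp < g Bq : the two long edges cross
    have hmid : g (OPAux.argminOn g q.support.toFinset) < g (OPAux.argmaxOn g p.support.toFinset) := by
      rcases hv12.lt_or_gt with hlt | hlt <;> linarith
    exact (hgc _ _ _ _ hadjp hadjq (by linarith) hmid (by linarith)).elim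
  · -- g Aq < g Ap and g Bq < g Bp
    have hmid : g (OPAux.argminOn g p.support.toFinset) < g (OPAux.argmaxOn g q.support.toFinset) := by
      rcases hv12.lt_or_gt with hlt | hlt <;> linarith
    exact (hgc _ _ _ _ hadjq hadjp (by linarith) hmid (by linarith)).elim
  · linarith
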